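/- In the signed basis |m̃⟩ = (−1)^{δ(m)}|m⟩ with δ(m) = ∑_j j(S − m_j), all off-diagonal matrix elements of H = J ∑_j S_j·S_{j+1} + K ∑_j (S_j^y)² − H ∑_j S_j^z are nonpositive, provided J ≥ 0 and K ≥ 0: ⟨m̃|H|m̃'⟩ ≤ 0 for all m ≠ m'. -/

import Mathlib

/-!
Conjugating by the diagonal sign matrix `U = diag((-1)^δ)` is a sublattice rotation: it factors
over the sites, and on site `j` it multiplies `S⁺_j`, `S⁻_j` (hence `S^x_j`, `S^y_j`) by
`(-1)^(j+1)` and fixes `S^z_j`. Because `L` is even, the two ends of every bond, including the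
periodic bond `(L-1, 0)`, carry opposite signs, so `U H U` differs from `H` only by the sign of the
transverse exchange. Now `S^x_j S^x_{j'} + S^y_j S^y_{j'} = (S⁺_j S⁻_{j'} + S⁻_j S⁺_{j'})/2` and
`(S^y)² = (S⁺S⁻ + S⁻S⁺)/4 - ((S⁺)² + (S⁻)²)/4`, where `S^±` have nonnegative entries and
`S⁺S⁻`, `S⁻S⁺`, `S^z` are diagonal: every off-diagonal entry of `U H U` is a nonnegative
combination of nonpositive numbers.
-/

open Matrix Complex

noncomputable section

/-- The spin quantum number `S = twoS/2`. -/
def Sval (twoS : ℕ) : ℝ := (twoS : ℝ) / 2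

/-- The `S^z` eigenvalue `m = k − S` of the `k`-th basis vector `|m⟩`. -/
def mz (twoS : ℕ) (k : Fin (twoS + 1)) : ℝ := (k : ℕ) - Sval twoS

/-- The raising operator `S⁺`, `S⁺|m⟩ = √(S(S+1) − m(m+1))|m+1⟩`. -/
def Sp (twoS : ℕ) : Matrix (Fin (twoS + 1)) (Fin (twoS + 1)) ℂ :=
  fun k' k => if (k' : ℕ) = (k : ℕ) + 1 then
    (Real.sqrt (Sval twoS * (Sval twoS + 1) - mz twoS k * (mz twoS k + 1)) : ℂ) else 0

/-- `S^x = (S⁺ + S⁻)/2`. -/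
def SxM (twoS : ℕ) : Matrix (Fin (twoS + 1)) (Fin (twoS + 1)) ℂ :=
  (1 / 2 : ℂ) • (Sp twoS + (Sp twoS)ᵀ)

/-- `S^y = (S⁻ − S⁺)·(i/2)`. -/
def SyM (twoS : ℕ) : Matrix (Fin (twoS + 1)) (Fin (twoS + 1)) ℂ :=
  (I / 2 : ℂ) • ((Sp twoS)ᵀ - Sp twoS)

/-- `S^z`, diagonal in this basis. -/
def SzM (twoS : ℕ) : Matrix (Fin (twoS + 1)) (Fin (twoS + 1)) ℂ :=
  Matrix.diagonal fun k => (mz twoS k : ℂ)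

/-- The one-site operator `A` acting on site `j` of the `L`-site chain. -/
def onSite (L twoS : ℕ) (j : Fin L) (A : Matrix (Fin (twoS + 1)) (Fin (twoS + 1)) ℂ) :
    Matrix (Fin L → Fin (twoS + 1)) (Fin L → Fin (twoS + 1)) ℂ :=
  fun x y => ∏ k : Fin L, (if k = j then A else 1) (x k) (y k)

/-- The Hamiltonian `H = J ∑_j S_j·S_{j+1} + K ∑_j (S_j^y)² − H ∑_j S_j^z`
with periodic boundary conditions. -/
def Ham (L twoS : ℕ) [NeZero L] (J K Hf : ℝ) :
    Matrix (Fin L → Fin (twoS + 1)) (Fin L → Fin (twoS + 1)) ℂ :=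
  (J : ℂ) • (∑ j : Fin L,
      (onSite L twoS j (SxM twoS) * onSite L twoS (j + 1) (SxM twoS)
        + onSite L twoS j (SyM twoS) * onSite L twoS (j + 1) (SyM twoS)
        + onSite L twoS j (SzM twoS) * onSite L twoS (j + 1) (SzM twoS)))
    + (K : ℂ) • (∑ j : Fin L, onSite L twoS j (SyM twoS) * onSite L twoS j (SyM twoS))
    - (Hf : ℂ) • ∑ j : Fin L, onSite L twoS j (SzM twoS)

/-- The sign exponent `δ(m) = ∑_{j=1}^L j(S − m_j)` of the signed basis, with
`S − m_j = twoS − x_j` in terms of the basis label `x_j ∈ {0,…,2S}`. -/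
def deltaExp (L twoS : ℕ) (x : Fin L → Fin (twoS + 1)) : ℕ :=
  ∑ j : Fin L, ((j : ℕ) + 1) * (twoS - (x j : ℕ))

-- With `ComplexOrder`, `z ≤ 0` on `ℂ` means that `z` is real and nonpositive.
open scoped ComplexOrder
open Finset

theorem neg_one_pow_mod_of_even {R : Type*} [Ring R] {L : ℕ} (hL : Even L)
    (n : ℕ) : (-1 : R) ^ (n % L) = (-1) ^ n := by
  rw [neg_one_pow_eq_pow_mod_two, Nat.mod_mod_of_dvd _ hL.two_dvd, ← neg_one_pow_eq_pow_mod_two]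

theorem neg_one_pow_val_add_one {R : Type*} [Ring R] {L : ℕ} [NeZero L]
    (hL : Even L) (j : Fin L) : (-1 : R) ^ ((j + 1 : Fin L) : ℕ) = -(-1) ^ (j : ℕ) := by
  rw [Fin.val_add, Fin.val_one', neg_one_pow_mod_of_even hL, pow_add, neg_one_pow_mod_of_even hL,
    pow_one, mul_neg_one]

theorem neg_one_pow_mul_neg_one_pow_self {R : Type*} [Ring R] (n : ℕ) :
    (-1 : R) ^ n * (-1) ^ n = 1 :=
  pow_mul_pow_eq_one n (by rw [neg_one_mul, neg_neg])

theorem conj_mul_of_mul_self_eq_one {M : Type*} [Monoid M] {d : M} (hd : d * d = 1) (a b : M) :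
    d * (a * b) * d = d * a * d * (d * b * d) := by
  simp only [mul_assoc, ← mul_assoc d d, hd, one_mul]

theorem I_div_two_mul_I_div_two : I / 2 * (I / 2) = -(1 / 4 : ℂ) := by
  rw [div_mul_div_comm, I_mul_I]
  norm_num

namespace Matrix

section Stoquastic

variable {n R : Type*}

def IsStoquastic [Zero R] [LE R] (M : Matrix n n R) : Prop :=
  Pairwise fun i j => M i j ≤ 0

theorem IsDiag.isStoquastic [Zero R] [Preorder R] {M : Matrix n n R} (h : M.IsDiag) :
    M.IsStoquastic :=
  fun _ _ hij => (h hij).le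

theorem isDiag_sum [AddCommMonoid R] {κ : Type*} (s : Finset κ) {M : κ → Matrix n n R}
    (h : ∀ k ∈ s, (M k).IsDiag) : (∑ k ∈ s, M k).IsDiag := fun i j hij =>
  (sum_apply i j s M).trans (sum_eq_zero fun k hk => h k hk hij)

theorem IsDiag.mul [Fintype n] [DecidableEq n] [NonUnitalNonAssocSemiring R]
    {M N : Matrix n n R} (hM : M.IsDiag) (hN : N.IsDiag) : (M * N).IsDiag := by
  rw [← hM.diagonal_diag, ← hN.diagonal_diag, diagonal_mul_diagonal]
  exact isDiag_diagonal _

theorem IsStoquastic.add [AddCommMonoid R] [PartialOrder R] [IsOrderedAddMonoid R]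
    {M N : Matrix n n R} (hM : M.IsStoquastic) (hN : N.IsStoquastic) : (M + N).IsStoquastic :=
  fun _ _ hij => add_nonpos (hM hij) (hN hij)

theorem isStoquastic_sum [AddCommMonoid R] [PartialOrder R] [IsOrderedAddMonoid R] {κ : Type*}
    (s : Finset κ) {M : κ → Matrix n n R} (h : ∀ k ∈ s, (M k).IsStoquastic) :
    (∑ k ∈ s, M k).IsStoquastic := fun i j hij =>
  (sum_apply i j s M).trans_le (sum_nonpos fun k hk => h k hk hij)

theorem isStoquastic_neg [AddCommGroup R] [PartialOrder R] [IsOrderedAddMonoid R]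
    {M : Matrix n n R} (hM : ∀ i j, 0 ≤ M i j) : (-M).IsStoquastic :=
  fun i j _ => neg_nonpos.mpr (hM i j)

theorem IsStoquastic.smul [Semiring R] [PartialOrder R] [IsOrderedRing R] {M : Matrix n n R}
    {c : R} (hc : 0 ≤ c) (hM : M.IsStoquastic) : (c • M).IsStoquastic :=
  fun _ _ hij => mul_nonpos_of_nonneg_of_nonpos hc (hM hij)

theorem mul_apply_nonneg [Semiring R] [PartialOrder R] [IsOrderedRing R] {l m : Type*} [Fintype m]
    {A : Matrix l m R} {B : Matrix m n R} (hA : ∀ i j, 0 ≤ A i j) (hB : ∀ i j, 0 ≤ B i j)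
    (i : l) (j : n) : 0 ≤ (A * B) i j :=
  sum_nonneg fun k _ => mul_nonneg (hA i k) (hB k j)

end Stoquastic

section PiKronecker

variable {ι l m n R : Type*} [Fintype ι]

def piKronecker [CommMonoid R] (A : ι → Matrix m n R) : Matrix (ι → m) (ι → n) R :=
  fun x y => ∏ k, A k (x k) (y k)

theorem piKronecker_mul [CommSemiring R] [DecidableEq ι] [Fintype m]
    (A : ι → Matrix l m R) (B : ι → Matrix m n R) :
    piKronecker A * piKronecker B = piKronecker fun k => A k * B k := by
  ext x y
  simp only [piKronecker, mul_apply, Fintype.prod_sum, prod_mul_distrib]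

theorem diagonal_mul_piKronecker_mul_diagonal [CommSemiring R] [DecidableEq ι]
    [Fintype m] [Fintype n] [DecidableEq m] [DecidableEq n] (d : ι → m → R) (A : ι → Matrix m n R)
    (e : ι → n → R) :
    diagonal (fun x : ι → m => ∏ k, d k (x k)) * piKronecker A
        * diagonal (fun y : ι → n => ∏ k, e k (y k))
      = piKronecker fun k => diagonal (d k) * A k * diagonal (e k) := by
  ext x y
  simp only [piKronecker, diagonal_mul, mul_diagonal, prod_mul_distrib]

theorem IsDiag.piKronecker [CommMonoidWithZero R] {A : ι → Matrix n n R}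
    (hA : ∀ k, (A k).IsDiag) : (piKronecker A).IsDiag := fun _ _ hxy => by
  obtain ⟨k, hk⟩ := Function.ne_iff.mp hxy
  exact prod_eq_zero (mem_univ k) (hA k hk)

theorem piKronecker_apply_nonneg [CommSemiring R] [PartialOrder R] [IsOrderedRing R]
    {A : ι → Matrix m n R} (hA : ∀ k i j, 0 ≤ A k i j) (x : ι → m) (y : ι → n) :
    0 ≤ piKronecker A x y :=
  prod_nonneg fun k _ => hA k _ _

end PiKronecker

end Matrix

section SpinChain

variable {L twoS : ℕ}

theorem onSite_eq_piKronecker (j : Fin L) (A : Matrix (Fin (twoS + 1)) (Fin (twoS + 1)) ℂ) :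
    onSite L twoS j A = piKronecker fun k => if k = j then A else 1 :=
  rfl

theorem onSite_apply (j : Fin L) (A : Matrix (Fin (twoS + 1)) (Fin (twoS + 1)) ℂ)
    (x y : Fin L → Fin (twoS + 1)) :
    onSite L twoS j A x y = A (x j) (y j) * ∏ k ∈ {j}ᶜ, (1 : Matrix _ _ ℂ) (x k) (y k) := by
  rw [onSite, Fintype.prod_eq_mul_prod_compl j, if_pos rfl]
  congr 1
  exact prod_congr rfl fun k hk => by rw [if_neg (mem_compl.mp hk ∘ mem_singleton.mpr)]

theorem onSite_add (j : Fin L) (A B : Matrix (Fin (twoS + 1)) (Fin (twoS + 1)) ℂ) :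
    onSite L twoS j (A + B) = onSite L twoS j A + onSite L twoS j B := by
  ext x y
  simp only [onSite_apply, Matrix.add_apply, add_mul]

theorem onSite_sub (j : Fin L) (A B : Matrix (Fin (twoS + 1)) (Fin (twoS + 1)) ℂ) :
    onSite L twoS j (A - B) = onSite L twoS j A - onSite L twoS j B := by
  ext x y
  simp only [onSite_apply, Matrix.sub_apply, sub_mul]

theorem onSite_smul (j : Fin L) (c : ℂ) (A : Matrix (Fin (twoS + 1)) (Fin (twoS + 1)) ℂ) :
    onSite L twoS j (c • A) = c • onSite L twoS j A := by
  ext x y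
  simp only [onSite_apply, Matrix.smul_apply, smul_eq_mul, mul_assoc]

theorem onSite_mul_onSite_self (j : Fin L) (A B : Matrix (Fin (twoS + 1)) (Fin (twoS + 1)) ℂ) :
    onSite L twoS j A * onSite L twoS j B = onSite L twoS j (A * B) := by
  rw [onSite_eq_piKronecker, onSite_eq_piKronecker, piKronecker_mul, onSite_eq_piKronecker]
  congr 1
  funext k
  split_ifs <;> simp

theorem Matrix.IsDiag.onSite {A : Matrix (Fin (twoS + 1)) (Fin (twoS + 1)) ℂ} (hA : A.IsDiag)
    (j : Fin L) : (onSite L twoS j A).IsDiag :=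
  IsDiag.piKronecker fun k => by split_ifs; exacts [hA, isDiag_one]

theorem onSite_apply_nonneg {A : Matrix (Fin (twoS + 1)) (Fin (twoS + 1)) ℂ}
    (hA : ∀ a b, 0 ≤ A a b) (j : Fin L) (x y : Fin L → Fin (twoS + 1)) :
    0 ≤ onSite L twoS j A x y :=
  piKronecker_apply_nonneg (fun k a b => by
    split_ifs
    · exact hA a b
    · rw [one_apply]; split_ifs; exacts [zero_le_one, le_rfl]) x y

end SpinChain

section SpinOperators

variable {twoS : ℕ}

theorem Sp_apply_nonneg (a b : Fin (twoS + 1)) : 0 ≤ Sp twoS a b := by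
  unfold Sp
  split_ifs
  exacts [zero_le_real.mpr (Real.sqrt_nonneg _), le_rfl]

theorem Sp_transpose_apply_nonneg (a b : Fin (twoS + 1)) : 0 ≤ (Sp twoS)ᵀ a b :=
  Sp_apply_nonneg b a

theorem Sp_apply_of_ne {a b : Fin (twoS + 1)} (h : (a : ℕ) ≠ b + 1) : Sp twoS a b = 0 :=
  if_neg h

theorem isDiag_Sp_mul_transpose : (Sp twoS * (Sp twoS)ᵀ).IsDiag := fun a b hab =>
  (mul_apply ..).trans <| sum_eq_zero fun c _ => by
    by_cases hac : (a : ℕ) = c + 1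
    · rw [transpose_apply, Sp_apply_of_ne fun hbc => hab (Fin.ext (hac.trans hbc.symm)), mul_zero]
    · rw [Sp_apply_of_ne hac, zero_mul]

theorem isDiag_transpose_mul_Sp : ((Sp twoS)ᵀ * Sp twoS).IsDiag := fun a b hab =>
  (mul_apply ..).trans <| sum_eq_zero fun c _ => by
    by_cases hca : (c : ℕ) = a + 1
    · rw [Sp_apply_of_ne (a := c) (b := b) fun hcb => hab (Fin.ext (by omega)), mul_zero]
    · rw [transpose_apply, Sp_apply_of_ne hca, zero_mul]

theorem SyM_mul_SyM : SyM twoS * SyM twoS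
    = (1 / 4 : ℂ) • (Sp twoS * (Sp twoS)ᵀ + (Sp twoS)ᵀ * Sp twoS)
      - (1 / 4 : ℂ) • (Sp twoS * Sp twoS + (Sp twoS)ᵀ * (Sp twoS)ᵀ) := by
  simp only [SyM, smul_mul_smul_comm, I_div_two_mul_I_div_two, Matrix.sub_mul, Matrix.mul_sub]
  module

end SpinOperators

section SignedBasis

variable {L twoS : ℕ}

def siteSign (twoS : ℕ) (j : Fin L) (a : Fin (twoS + 1)) : ℂ :=
  (-1) ^ (((j : ℕ) + 1) * (twoS - a))

def signOp (L twoS : ℕ) : Matrix (Fin L → Fin (twoS + 1)) (Fin L → Fin (twoS + 1)) ℂ :=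
  diagonal fun x => (-1) ^ deltaExp L twoS x

theorem signOp_mul_mul_signOp_apply
    (M : Matrix (Fin L → Fin (twoS + 1)) (Fin L → Fin (twoS + 1)) ℂ)
    (x y : Fin L → Fin (twoS + 1)) :
    (signOp L twoS * M * signOp L twoS) x y
      = (-1) ^ (deltaExp L twoS x + deltaExp L twoS y) * M x y := by
  rw [signOp, mul_diagonal, diagonal_mul, pow_add]
  ring

theorem signOp_mul_self : signOp L twoS * signOp L twoS = 1 := by
  rw [signOp, diagonal_mul_diagonal, ← diagonal_one]
  exact congrArg diagonal (funext fun x => neg_one_pow_mul_neg_one_pow_self _)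

theorem neg_one_pow_deltaExp (x : Fin L → Fin (twoS + 1)) :
    (-1 : ℂ) ^ deltaExp L twoS x = ∏ k, siteSign twoS k (x k) :=
  (prod_pow_eq_pow_sum _ _ _).symm

theorem siteSign_mul_self (j : Fin L) (a : Fin (twoS + 1)) :
    siteSign twoS j a * siteSign twoS j a = 1 :=
  neg_one_pow_mul_neg_one_pow_self _

theorem diagonal_siteSign_mul_self (j : Fin L) :
    diagonal (siteSign twoS j) * diagonal (siteSign twoS j) = 1 := by
  rw [diagonal_mul_diagonal, ← diagonal_one]
  exact congrArg diagonal (funext (siteSign_mul_self j))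

theorem siteSign_mul_siteSign_of_eq_succ (j : Fin L) {a b : Fin (twoS + 1)}
    (h : (a : ℕ) = b + 1) :
    siteSign twoS j a * siteSign twoS j b = (-1) ^ ((j : ℕ) + 1) := by
  have hb : twoS - b = (twoS - a) + 1 := by omega
  rw [siteSign, siteSign, hb, mul_add_one, pow_add, ← mul_assoc,
    neg_one_pow_mul_neg_one_pow_self, one_mul]

theorem signOp_mul_onSite_mul_signOp (j : Fin L)
    (A : Matrix (Fin (twoS + 1)) (Fin (twoS + 1)) ℂ) :
    signOp L twoS * onSite L twoS j A * signOp L twoS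
      = onSite L twoS j (diagonal (siteSign twoS j) * A * diagonal (siteSign twoS j)) := by
  simp only [signOp, neg_one_pow_deltaExp, onSite_eq_piKronecker,
    diagonal_mul_piKronecker_mul_diagonal]
  congr 1
  funext k
  split_ifs with hk
  · rw [hk]
  · rw [Matrix.mul_one, diagonal_siteSign_mul_self]

end SignedBasis

section SublatticeRotation

variable {L twoS : ℕ}

theorem diagonal_siteSign_mul_Sp_mul (j : Fin L) :
    diagonal (siteSign twoS j) * Sp twoS * diagonal (siteSign twoS j)
      = (-1 : ℂ) ^ ((j : ℕ) + 1) • Sp twoS := by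
  ext a b
  rw [mul_diagonal, diagonal_mul, Matrix.smul_apply, smul_eq_mul, mul_right_comm]
  by_cases h : (a : ℕ) = b + 1
  · rw [siteSign_mul_siteSign_of_eq_succ j h]
  · rw [Sp_apply_of_ne h, mul_zero, mul_zero]

theorem diagonal_siteSign_mul_Sp_transpose_mul (j : Fin L) :
    diagonal (siteSign twoS j) * (Sp twoS)ᵀ * diagonal (siteSign twoS j)
      = (-1 : ℂ) ^ ((j : ℕ) + 1) • (Sp twoS)ᵀ := by
  simpa only [transpose_mul, diagonal_transpose, transpose_smul, Matrix.mul_assoc]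
    using congrArg transpose (diagonal_siteSign_mul_Sp_mul (twoS := twoS) j)

theorem diagonal_siteSign_mul_SxM_mul (j : Fin L) :
    diagonal (siteSign twoS j) * SxM twoS * diagonal (siteSign twoS j)
      = (-1 : ℂ) ^ ((j : ℕ) + 1) • SxM twoS := by
  rw [SxM, Matrix.mul_smul, Matrix.smul_mul, Matrix.mul_add, Matrix.add_mul,
    diagonal_siteSign_mul_Sp_mul, diagonal_siteSign_mul_Sp_transpose_mul, ← smul_add, smul_comm]

theorem diagonal_siteSign_mul_SyM_mul (j : Fin L) :
    diagonal (siteSign twoS j) * SyM twoS * diagonal (siteSign twoS j)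
      = (-1 : ℂ) ^ ((j : ℕ) + 1) • SyM twoS := by
  rw [SyM, Matrix.mul_smul, Matrix.smul_mul, Matrix.mul_sub, Matrix.sub_mul,
    diagonal_siteSign_mul_Sp_mul, diagonal_siteSign_mul_Sp_transpose_mul, ← smul_sub, smul_comm]

theorem diagonal_siteSign_mul_SzM_mul (j : Fin L) :
    diagonal (siteSign twoS j) * SzM twoS * diagonal (siteSign twoS j) = SzM twoS := by
  rw [SzM, diagonal_mul_diagonal, diagonal_mul_diagonal]
  exact congrArg diagonal (funext fun a => by rw [mul_right_comm, siteSign_mul_self, one_mul])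

theorem signOp_conj_onSite_mul_onSite_add_one [NeZero L] (hL : Even L)
    {A : Matrix (Fin (twoS + 1)) (Fin (twoS + 1)) ℂ}
    (hA : ∀ j : Fin L, diagonal (siteSign twoS j) * A * diagonal (siteSign twoS j)
      = (-1 : ℂ) ^ ((j : ℕ) + 1) • A) (j : Fin L) :
    signOp L twoS * (onSite L twoS j A * onSite L twoS (j + 1) A) * signOp L twoS
      = -(onSite L twoS j A * onSite L twoS (j + 1) A) := by
  rw [conj_mul_of_mul_self_eq_one signOp_mul_self, signOp_mul_onSite_mul_signOp,
    signOp_mul_onSite_mul_signOp, hA, hA, onSite_smul, onSite_smul, smul_mul_smul_comm,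
    pow_succ, pow_succ (-1 : ℂ) ((j + 1 : Fin L) : ℕ), neg_one_pow_val_add_one hL,
    show (-1 : ℂ) ^ (j : ℕ) * -1 * (-(-1) ^ (j : ℕ) * -1) = -1 by
    linear_combination -neg_one_pow_mul_neg_one_pow_self (R := ℂ) j, neg_one_smul]

theorem signOp_conj_onSite_mul_onSite_self {A : Matrix (Fin (twoS + 1)) (Fin (twoS + 1)) ℂ}
    (j : Fin L) (hA : diagonal (siteSign twoS j) * A * diagonal (siteSign twoS j)
      = (-1 : ℂ) ^ ((j : ℕ) + 1) • A) :
    signOp L twoS * (onSite L twoS j A * onSite L twoS j A) * signOp L twoS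
      = onSite L twoS j A * onSite L twoS j A := by
  rw [conj_mul_of_mul_self_eq_one signOp_mul_self, signOp_mul_onSite_mul_signOp, hA,
    onSite_smul, smul_mul_smul_comm, neg_one_pow_mul_neg_one_pow_self, one_smul]

end SublatticeRotation

section Hamiltonian

variable {L twoS : ℕ}

theorem signOp_mul_onSite_SzM_mul_signOp (j : Fin L) :
    signOp L twoS * onSite L twoS j (SzM twoS) * signOp L twoS = onSite L twoS j (SzM twoS) := by
  rw [signOp_mul_onSite_mul_signOp, diagonal_siteSign_mul_SzM_mul]

theorem signOp_mul_Ham_mul_signOp [NeZero L] (hL : Even L) (J K Hf : ℝ) :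
    signOp L twoS * Ham L twoS J K Hf * signOp L twoS
      = (J : ℂ) • (∑ j : Fin L,
          (-(onSite L twoS j (SxM twoS) * onSite L twoS (j + 1) (SxM twoS)
            + onSite L twoS j (SyM twoS) * onSite L twoS (j + 1) (SyM twoS))
          + onSite L twoS j (SzM twoS) * onSite L twoS (j + 1) (SzM twoS)))
        + (K : ℂ) • (∑ j : Fin L, onSite L twoS j (SyM twoS) * onSite L twoS j (SyM twoS))
        - (Hf : ℂ) • ∑ j : Fin L, onSite L twoS j (SzM twoS) := by
  simp only [Ham, Matrix.mul_add, Matrix.add_mul, Matrix.mul_sub, Matrix.sub_mul, Matrix.mul_smul,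
    Matrix.smul_mul, mul_sum, sum_mul,
    signOp_conj_onSite_mul_onSite_add_one hL diagonal_siteSign_mul_SxM_mul,
    signOp_conj_onSite_mul_onSite_add_one hL diagonal_siteSign_mul_SyM_mul,
    signOp_conj_onSite_mul_onSite_self _ (diagonal_siteSign_mul_SyM_mul _),
    conj_mul_of_mul_self_eq_one signOp_mul_self (onSite L twoS _ (SzM twoS)),
    signOp_mul_onSite_SzM_mul_signOp, neg_add]

theorem onSite_SxM_mul_add_onSite_SyM_mul (j j' : Fin L) :
    onSite L twoS j (SxM twoS) * onSite L twoS j' (SxM twoS)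
        + onSite L twoS j (SyM twoS) * onSite L twoS j' (SyM twoS)
      = (1 / 2 : ℂ) • (onSite L twoS j (Sp twoS) * onSite L twoS j' (Sp twoS)ᵀ
          + onSite L twoS j (Sp twoS)ᵀ * onSite L twoS j' (Sp twoS)) := by
  simp only [SxM, SyM, onSite_smul, onSite_add, onSite_sub, smul_mul_smul_comm,
    I_div_two_mul_I_div_two,
    Matrix.add_mul, Matrix.mul_add, Matrix.sub_mul, Matrix.mul_sub]
  module

theorem isStoquastic_exchange (j j' : Fin L) :
    (-(onSite L twoS j (SxM twoS) * onSite L twoS j' (SxM twoS)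
        + onSite L twoS j (SyM twoS) * onSite L twoS j' (SyM twoS))
      + onSite L twoS j (SzM twoS) * onSite L twoS j' (SzM twoS)).IsStoquastic := by
  refine (isStoquastic_neg fun x y => ?_).add
    ((isDiag_diagonal _).onSite j |>.mul ((isDiag_diagonal _).onSite j')).isStoquastic
  rw [onSite_SxM_mul_add_onSite_SyM_mul, Matrix.smul_apply, smul_eq_mul, Matrix.add_apply]
  refine mul_nonneg (by rw [Complex.nonneg_iff]; norm_num) (add_nonneg ?_ ?_)
  · exact mul_apply_nonneg (onSite_apply_nonneg Sp_apply_nonneg j)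
      (onSite_apply_nonneg Sp_transpose_apply_nonneg j') x y
  · exact mul_apply_nonneg (onSite_apply_nonneg Sp_transpose_apply_nonneg j)
      (onSite_apply_nonneg Sp_apply_nonneg j') x y

theorem isStoquastic_onSite_SyM_mul_onSite_SyM (j : Fin L) :
    (onSite L twoS j (SyM twoS) * onSite L twoS j (SyM twoS)).IsStoquastic := by
  rw [onSite_mul_onSite_self, SyM_mul_SyM, onSite_sub, onSite_smul, onSite_smul, sub_eq_add_neg]
  have hSq : ∀ a b, 0 ≤ (Sp twoS * Sp twoS + (Sp twoS)ᵀ * (Sp twoS)ᵀ) a b := fun a b =>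
    add_nonneg (mul_apply_nonneg Sp_apply_nonneg Sp_apply_nonneg a b)
      (mul_apply_nonneg Sp_transpose_apply_nonneg Sp_transpose_apply_nonneg a b)
  refine (((isDiag_Sp_mul_transpose.add isDiag_transpose_mul_Sp).onSite j).smul _).isStoquastic.add
    (isStoquastic_neg fun x y => mul_nonneg ?_ (onSite_apply_nonneg hSq j x y))
  rw [Complex.nonneg_iff]
  norm_num

theorem isStoquastic_signOp_mul_Ham_mul_signOp [NeZero L] (hL : Even L) {J K : ℝ} (hJ : 0 ≤ J)
    (hK : 0 ≤ K) (Hf : ℝ) : (signOp L twoS * Ham L twoS J K Hf * signOp L twoS).IsStoquastic := by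
  rw [signOp_mul_Ham_mul_signOp hL, sub_eq_add_neg, ← neg_smul]
  have hExchange :=
    isStoquastic_sum univ fun (j : Fin L) _ => isStoquastic_exchange (twoS := twoS) j (j + 1)
  have hAnisotropy :=
    isStoquastic_sum univ fun (j : Fin L) _ =>
      isStoquastic_onSite_SyM_mul_onSite_SyM (twoS := twoS) j
  have hZeeman : (∑ j : Fin L, onSite L twoS j (SzM twoS)).IsDiag :=
    isDiag_sum univ fun j _ => (isDiag_diagonal _).onSite j
  exact ((hExchange.smul (zero_le_real.mpr hJ)).add (hAnisotropy.smul (zero_le_real.mpr hK))).add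
    (hZeeman.smul _).isStoquastic

end Hamiltonian

/-- in the signed basis `|m̃⟩ = (−1)^{δ(m)}|m⟩`, all off-diagonal
matrix elements of `H = J ∑_j S_j·S_{j+1} + K ∑_j (S_j^y)² − H ∑_j S_j^z` are real
and nonpositive, provided `J ≥ 0` and `K ≥ 0`. -/
theorem signed_basis_nonpositive (L twoS : ℕ) [NeZero L] (hLeven : Even L)
    (J K Hf : ℝ) (hJ : 0 ≤ J) (hK : 0 ≤ K)
    (x y : Fin L → Fin (twoS + 1)) (hxy : x ≠ y) :
    ((-1 : ℂ) ^ (deltaExp L twoS x + deltaExp L twoS y) * Ham L twoS J K Hf x y).re ≤ 0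
      ∧ ((-1 : ℂ) ^ (deltaExp L twoS x + deltaExp L twoS y)
          * Ham L twoS J K Hf x y).im = 0 := by
  rw [← Complex.nonpos_iff, ← signOp_mul_mul_signOp_apply]
  exact isStoquastic_signOp_mul_Ham_mul_signOp hLeven hJ hK Hf hxy

end
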